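/- Let F be the free abelian group on generators e_1, e_2, e_3, ... (indexed by positive integers), and let N be the subgroup generated by the elements e_2, e_{2k+2} + e_{2k} for k ≥ 1, and e_{2k+1} + e_{2k-1} for k ≥ 1. Then the quotient F/N is isomorphic to ℤ, with the class of e_1 as a generator. -/

import Mathlib

/-- The free abelian group on generators e_1, e_2, ... indexed by positive integers. -/
abbrev F : Type := ℕ+ →₀ ℤ

/-- The generator e_i. -/
noncomputable def e (i : ℕ+) : F := Finsupp.single i 1

/-- The subgroup N generated by e_2, e_{2k+2} + e_{2k} (k ≥ 1),
and e_{2k+1} + e_{2k-1} (k ≥ 1). -/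
noncomputable def N : AddSubgroup F := AddSubgroup.closure
  ({e 2} ∪
   {y | ∃ k : ℕ, ∃ _ : 1 ≤ k,
      y = e ⟨2 * k + 2, by omega⟩ + e ⟨2 * k, by omega⟩} ∪
   {y | ∃ k : ℕ, ∃ _ : 1 ≤ k,
      y = e ⟨2 * k + 1, by omega⟩ + e ⟨2 * k - 1, by omega⟩})

/-!
The relations say e_{2k} ≡ 0 and e_{2k+1} ≡ -e_{2k-1}, so modulo N every generator is an integer
multiple of e_1: e_{2m+1} ≡ (-1)^m e_1. Conversely the homomorphism sending e_{2m+1} to (-1)^m and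
the even generators to 0 kills all the relations; it is onto ℤ with kernel exactly N.
-/

section QuotientInt

variable {G : Type*} [AddCommGroup G]

theorem AddMonoidHom.ker_eq_of_sub_smul_mem {H : AddSubgroup G} (φ : G →+ ℤ) (g : G)
    (hH : H ≤ φ.ker) (hsub : ∀ x, x - φ x • g ∈ H) : φ.ker = H := by
  refine le_antisymm (fun x hx => ?_) hH
  simpa [(AddMonoidHom.mem_ker).mp hx] using hsub x

theorem exists_quotient_addEquiv_int {H : AddSubgroup G} (φ : G →+ ℤ) (g : G) (hg : φ g = 1)
    (hH : H ≤ φ.ker) (hsub : ∀ x, x - φ x • g ∈ H) :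
    ∃ ψ : (G ⧸ H) ≃+ ℤ, ψ (g : G ⧸ H) = 1 := by
  have hsurj : Function.Surjective φ := fun n => ⟨n • g, by simp [hg]⟩
  exact ⟨(QuotientAddGroup.quotientAddEquivOfEq (φ.ker_eq_of_sub_smul_mem g hH hsub).symm).trans
    (QuotientAddGroup.quotientKerEquivOfSurjective φ hsurj), hg⟩

end QuotientInt

theorem Finsupp.sub_smul_mem_of_forall_single {ι : Type*} {H : AddSubgroup (ι →₀ ℤ)}
    (φ : (ι →₀ ℤ) →+ ℤ) (g : ι →₀ ℤ) (h : ∀ i, single i 1 - φ (single i 1) • g ∈ H)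
    (x : ι →₀ ℤ) : x - φ x • g ∈ H := by
  let ψ : (ι →₀ ℤ) →+ (ι →₀ ℤ) := AddMonoidHom.id _ - (zmultiplesHom _ g).comp φ
  change ψ x ∈ H
  induction x using Finsupp.induction_linear with
  | zero => simp
  | add a b ha hb => simpa using add_mem ha hb
  | single i n =>
    rw [← smul_single_one, map_zsmul]
    exact zsmul_mem (h i) n

def oddSign (n : ℕ) : ℤ := if Even n then 0 else (-1) ^ (n / 2)

theorem oddSign_two_mul (k : ℕ) : oddSign (2 * k) = 0 := by
  simp [oddSign]

theorem oddSign_two_mul_add_one (k : ℕ) : oddSign (2 * k + 1) = (-1) ^ k := by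
  have hdiv : (2 * k + 1) / 2 = k := by omega
  simp [oddSign, hdiv]

theorem oddSign_add_two (n : ℕ) : oddSign (n + 2) = -oddSign n := by
  simp only [oddSign, Nat.even_add, even_two, iff_true, Nat.add_div_right n two_pos, pow_succ]
  split_ifs <;> simp

noncomputable def oddSignHom : F →+ ℤ :=
  Finsupp.liftAddHom fun i => zmultiplesHom ℤ (oddSign i)

theorem oddSignHom_e (i : ℕ+) : oddSignHom (e i) = oddSign i := by
  simp [oddSignHom, e]

theorem oddSignHom_e_mk (n : ℕ) (hn : 0 < n) : oddSignHom (e ⟨n, hn⟩) = oddSign n :=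
  oddSignHom_e _

theorem e_two_mul_mem (k : ℕ) (hk : 1 ≤ k) : e ⟨2 * k, by omega⟩ ∈ N := by
  induction k, hk using Nat.le_induction with
  | base => exact AddSubgroup.subset_closure (.inl (.inl rfl))
  | succ k hk ih =>
    have hrel : e ⟨2 * k + 2, by omega⟩ + e ⟨2 * k, by omega⟩ ∈ N :=
      AddSubgroup.subset_closure (.inl (.inr ⟨k, hk, rfl⟩))
    have := sub_mem hrel ih
    rwa [add_sub_cancel_right] at this

theorem e_two_mul_add_one_sub_mem (k : ℕ) : e ⟨2 * k + 1, by omega⟩ - (-1) ^ k • e 1 ∈ N := by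
  induction k with
  | zero => simp
  | succ k ih =>
    have hrel : e ⟨2 * (k + 1) + 1, by omega⟩ + e ⟨2 * k + 1, by omega⟩ ∈ N :=
      AddSubgroup.subset_closure (.inr ⟨k + 1, by omega, rfl⟩)
    convert sub_mem hrel ih using 1
    rw [pow_succ]
    module

theorem e_sub_oddSign_smul_mem (i : ℕ+) : e i - oddSign i • e 1 ∈ N := by
  obtain ⟨n, hn⟩ := i
  obtain ⟨k, rfl | rfl⟩ := Nat.even_or_odd' n
  · simpa [oddSign_two_mul] using e_two_mul_mem k (by omega)
  · simpa [oddSign_two_mul_add_one] using e_two_mul_add_one_sub_mem k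

theorem N_le_ker_oddSignHom : N ≤ oddSignHom.ker := by
  rw [N, AddSubgroup.closure_le]
  rintro x ((rfl | ⟨k, hk, rfl⟩) | ⟨k, hk, rfl⟩)
  all_goals simp only [SetLike.mem_coe, AddMonoidHom.mem_ker, map_add, oddSignHom_e,
    oddSignHom_e_mk]
  · rfl
  · rw [oddSign_add_two, neg_add_cancel]
  · rw [show 2 * k + 1 = 2 * k - 1 + 2 by omega, oddSign_add_two, neg_add_cancel]

/-- F/N is isomorphic to ℤ, with the class of e_1 as a generator. -/
theorem stmt11 : ∃ φ : (F ⧸ N) ≃+ ℤ, φ (QuotientAddGroup.mk (e 1)) = 1 :=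
  exists_quotient_addEquiv_int oddSignHom (e 1) (oddSignHom_e 1)
    N_le_ker_oddSignHom (Finsupp.sub_smul_mem_of_forall_single oddSignHom (e 1)
      fun i => by
        change e i - oddSignHom (e i) • e 1 ∈ N
        simpa only [oddSignHom_e] using e_sub_oddSign_smul_mem i)
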